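/- Let X₁, …, Xₙ be identically distributed nonnegative integrable random variables (not necessarily independent), let p₁, …, pₙ ≥ 0 with Σpⱼ = 1, and let A be a nonnegative random variable independent of (X₁,…,Xₙ). Then E[log₂(1 + A/(1 + Σⱼ pⱼ Xⱼ))] ≤ E[log₂(1 + A/(1 + X₁))]. -/

import Mathlib

/-!
For `a ≥ 0` the map `x ↦ log (1 + a / (1 + x)) = log (1 + a + x) - log (1 + x)` is convex, its
second derivative being `(1 + x)⁻² - (1 + a + x)⁻² ≥ 0`. Jensen's inequality therefore bounds the
integrand on the left pointwise by `∑ pⱼ log (1 + A / (1 + Xⱼ))`. Since `A` is independent of each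
`Xⱼ` and the `Xⱼ` share a law, every pair `(A, Xⱼ)` has the law of `(A, X₁)`, so all these terms
have the same expectation. The integrands differ from `log (1 + A)` by at most `log (1 + Xⱼ) ≤ Xⱼ`,
so they are integrable exactly when `log (1 + A)` is.
-/

open MeasureTheory ProbabilityTheory Real Set

namespace Real

theorem convexOn_log_one_add_div_one_add {a : ℝ} (ha : 0 ≤ a) :
    ConvexOn ℝ (Ioi (-1)) fun x => log (1 + a / (1 + x)) := by
  have hlog_sub : ConvexOn ℝ (Ioi (-1)) fun x => log (1 + a + x) - log (1 + x) := by
    have hpos {x : ℝ} (hx : x ∈ Ioi (-1)) : 0 < 1 + x ∧ 0 < 1 + a + x := by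
      simp only [mem_Ioi] at hx; constructor <;> linarith
    have hf' {x : ℝ} (hx : x ∈ Ioi (-1)) :
        HasDerivAt (fun x => log (1 + a + x) - log (1 + x)) ((1 + a + x)⁻¹ - (1 + x)⁻¹) x := by
      simpa using (((hasDerivAt_id x).const_add (1 + a)).log (hpos hx).2.ne').fun_sub
        (((hasDerivAt_id x).const_add 1).log (hpos hx).1.ne')
    have hf'' {x : ℝ} (hx : x ∈ Ioi (-1)) :
        HasDerivAt (fun x => (1 + a + x)⁻¹ - (1 + x)⁻¹)
          (-1 / (1 + a + x) ^ 2 - -1 / (1 + x) ^ 2) x := by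
      simpa using (((hasDerivAt_id x).const_add (1 + a)).fun_inv (hpos hx).2.ne').fun_sub
        (((hasDerivAt_id x).const_add 1).fun_inv (hpos hx).1.ne')
    refine convexOn_of_hasDerivWithinAt2_nonneg (convex_Ioi _)
      (f' := fun x => (1 + a + x)⁻¹ - (1 + x)⁻¹)
      (f'' := fun x => -1 / (1 + a + x) ^ 2 - -1 / (1 + x) ^ 2)
      (fun x hx => (hf' hx).continuousAt.continuousWithinAt) ?_ ?_ ?_
    all_goals simp only [interior_Ioi]
    · exact fun x hx => (hf' hx).hasDerivWithinAt
    · exact fun x hx => (hf'' hx).hasDerivWithinAt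
    · intro x hx
      obtain ⟨hx1, hxa⟩ := hpos hx
      have : ((1 + a + x) ^ 2)⁻¹ ≤ ((1 + x) ^ 2)⁻¹ := by gcongr; linarith
      rw [neg_div, neg_div, one_div, one_div]
      linarith
  refine hlog_sub.congr fun x (hx : -1 < x) => ?_
  have hx1 : 0 < 1 + x := by linarith
  rw [add_div' _ _ _ hx1.ne', log_div (by linarith) hx1.ne', one_mul, add_right_comm]

theorem log_one_add_div_one_add_nonneg {a x : ℝ} (ha : 0 ≤ a) (hx : 0 ≤ x) :
    0 ≤ log (1 + a / (1 + x)) :=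
  log_nonneg (le_add_of_nonneg_right (by positivity))

theorem log_one_add_div_one_add_le {a x : ℝ} (ha : 0 ≤ a) (hx : 0 ≤ x) :
    log (1 + a / (1 + x)) ≤ log (1 + a) := by
  gcongr
  exact div_le_self ha (le_add_of_nonneg_right hx)

theorem log_one_add_le_log_one_add_div_one_add_add {a x : ℝ} (ha : 0 ≤ a) (hx : 0 ≤ x) :
    log (1 + a) ≤ log (1 + a / (1 + x)) + x := by
  have hx1 : 0 < 1 + x := by linarith
  calc log (1 + a) ≤ log ((1 + a / (1 + x)) * (1 + x)) := by
        gcongr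
        rw [add_mul, div_mul_cancel₀ _ hx1.ne']
        linarith
    _ = log (1 + a / (1 + x)) + log (1 + x) := log_mul (by positivity) hx1.ne'
    _ ≤ log (1 + a / (1 + x)) + x := by gcongr; linarith [log_le_sub_one_of_pos hx1]

end Real

section

variable {Ω : Type*} [MeasurableSpace Ω] {P : Measure Ω}

theorem integrable_log_one_add_div_one_add_iff {A Y : Ω → ℝ} (hA : AEMeasurable A P)
    (hA₀ : ∀ ω, 0 ≤ A ω) (hY : Integrable Y P) (hY₀ : ∀ ω, 0 ≤ Y ω) :
    Integrable (fun ω => log (1 + A ω / (1 + Y ω))) P ↔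
      Integrable (fun ω => log (1 + A ω)) P := by
  have hlog_nonneg (ω : Ω) : 0 ≤ log (1 + A ω) := log_nonneg (by linarith [hA₀ ω])
  have hY' := hY.aemeasurable
  constructor
  · intro h
    refine (h.add hY).mono' (measurable_log.comp_aemeasurable (by fun_prop)).aestronglyMeasurable
      (.of_forall fun ω => ?_)
    rw [norm_of_nonneg (hlog_nonneg ω)]
    exact log_one_add_le_log_one_add_div_one_add_add (hA₀ ω) (hY₀ ω)
  · intro h
    refine h.mono' (measurable_log.comp_aemeasurable (by fun_prop)).aestronglyMeasurable
      (.of_forall fun ω => ?_)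
    rw [norm_of_nonneg (log_one_add_div_one_add_nonneg (hA₀ ω) (hY₀ ω))]
    exact log_one_add_div_one_add_le (hA₀ ω) (hY₀ ω)

theorem integral_log_one_add_div_one_add_sum_le [IsFiniteMeasure P] {ι : Type*} [Fintype ι]
    {X : ι → Ω → ℝ} (hX₀ : ∀ j ω, 0 ≤ X j ω) (hX : ∀ j, Integrable (X j) P) {i₀ : ι}
    (hident : ∀ j, IdentDistrib (X j) (X i₀) P P) {p : ι → ℝ} (hp : ∀ j, 0 ≤ p j)
    (hpsum : ∑ j, p j = 1) {A : Ω → ℝ} (hA : AEMeasurable A P) (hA₀ : ∀ ω, 0 ≤ A ω)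
    (hindep : ∀ j, IndepFun A (X j) P) :
    ∫ ω, log (1 + A ω / (1 + ∑ j, p j * X j ω)) ∂P
      ≤ ∫ ω, log (1 + A ω / (1 + X i₀ ω)) ∂P := by
  have hS₀ (ω : Ω) : 0 ≤ ∑ j, p j * X j ω :=
    Finset.sum_nonneg fun j _ => mul_nonneg (hp j) (hX₀ j ω)
  have hS : Integrable (fun ω => ∑ j, p j * X j ω) P :=
    integrable_finsetSum _ fun j _ => (hX j).const_mul _
  have hident_log (j : ι) : IdentDistrib (fun ω => log (1 + A ω / (1 + X j ω)))
      (fun ω => log (1 + A ω / (1 + X i₀ ω))) P P :=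
    ((IdentDistrib.refl hA).prodMk (hident j) (hindep j) (hindep i₀)).comp
      (u := fun q : ℝ × ℝ => log (1 + q.1 / (1 + q.2))) (by fun_prop)
  by_cases hlogA : Integrable (fun ω => log (1 + A ω)) P
  swap
  -- both sides are then non-integrable, so both integrals take the junk value `0`
  · rw [integral_undef (mt (integrable_log_one_add_div_one_add_iff hA hA₀ hS hS₀).1 hlogA),
      integral_undef
        (mt (integrable_log_one_add_div_one_add_iff hA hA₀ (hX i₀) (hX₀ i₀)).1 hlogA)]
  have hint (j : ι) : Integrable (fun ω => log (1 + A ω / (1 + X j ω))) P :=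
    (integrable_log_one_add_div_one_add_iff hA hA₀ (hX j) (hX₀ j)).2 hlogA
  have hjensen (ω : Ω) : log (1 + A ω / (1 + ∑ j, p j * X j ω))
      ≤ ∑ j, p j * log (1 + A ω / (1 + X j ω)) := by
    simpa using (convexOn_log_one_add_div_one_add (hA₀ ω)).map_sum_le (t := Finset.univ)
      (fun j _ => hp j) hpsum fun j _ => (show (-1 : ℝ) < X j ω by linarith [hX₀ j ω])
  calc ∫ ω, log (1 + A ω / (1 + ∑ j, p j * X j ω)) ∂P
      ≤ ∫ ω, ∑ j, p j * log (1 + A ω / (1 + X j ω)) ∂P :=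
        integral_mono ((integrable_log_one_add_div_one_add_iff hA hA₀ hS hS₀).2 hlogA)
          (integrable_finsetSum _ fun j _ => (hint j).const_mul _) hjensen
    _ = ∑ j, p j * ∫ ω, log (1 + A ω / (1 + X j ω)) ∂P := by
        rw [integral_finsetSum _ fun j _ => (hint j).const_mul _]
        simp only [integral_const_mul]
    _ = ∫ ω, log (1 + A ω / (1 + X i₀ ω)) ∂P := by
        simp only [fun j => (hident_log j).integral_eq, ← Finset.sum_mul, hpsum, one_mul]

end

theorem stmt_2_general {Ω : Type*} [MeasurableSpace Ω] (P : Measure Ω) [IsProbabilityMeasure P]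
    (n : ℕ) (hn : 0 < n) (X : Fin n → Ω → ℝ)
    (hXnonneg : ∀ j ω, 0 ≤ X j ω)
    (hXint : ∀ j, Integrable (X j) P)
    (hident : ∀ j, IdentDistrib (X j) (X ⟨0, hn⟩) P P)
    (p : Fin n → ℝ) (hp : ∀ j, 0 ≤ p j) (hpsum : ∑ j, p j = 1)
    (A : Ω → ℝ) (hAmeas : Measurable A) (hAnonneg : ∀ ω, 0 ≤ A ω)
    (hindep : IndepFun A (fun ω => fun j => X j ω) P) :
    ∫ ω, Real.logb 2 (1 + A ω / (1 + ∑ j, p j * X j ω)) ∂P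
      ≤ ∫ ω, Real.logb 2 (1 + A ω / (1 + X ⟨0, hn⟩ ω)) ∂P := by
  have hlog := integral_log_one_add_div_one_add_sum_le hXnonneg hXint hident hp hpsum
    hAmeas.aemeasurable hAnonneg fun j => hindep.comp measurable_id (measurable_pi_apply j)
  simp only [logb, integral_div]
  exact div_le_div_of_nonneg_right hlog (log_nonneg one_le_two)

/-- Let `X₁, …, Xₙ` be identically distributed nonnegative integrable random variables
(not necessarily independent), `p₁, …, pₙ ≥ 0` with `Σ pⱼ = 1`, and `A` a nonnegative
random variable independent of `(X₁, …, Xₙ)`.  Then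
`E[log₂(1 + A/(1 + Σⱼ pⱼ Xⱼ))] ≤ E[log₂(1 + A/(1 + X₁))]`. -/
theorem stmt_2 {Ω : Type*} [MeasurableSpace Ω] (P : Measure Ω) [IsProbabilityMeasure P]
    (n : ℕ) (hn : 0 < n) (X : Fin n → Ω → ℝ)
    (hXmeas : ∀ j, Measurable (X j))
    (hXnonneg : ∀ j ω, 0 ≤ X j ω)
    (hXint : ∀ j, Integrable (X j) P)
    (hident : ∀ j, IdentDistrib (X j) (X ⟨0, hn⟩) P P)
    (p : Fin n → ℝ) (hp : ∀ j, 0 ≤ p j) (hpsum : ∑ j, p j = 1)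
    (A : Ω → ℝ) (hAmeas : Measurable A) (hAnonneg : ∀ ω, 0 ≤ A ω)
    (hindep : IndepFun A (fun ω => fun j => X j ω) P) :
    ∫ ω, Real.logb 2 (1 + A ω / (1 + ∑ j, p j * X j ω)) ∂P
      ≤ ∫ ω, Real.logb 2 (1 + A ω / (1 + X ⟨0, hn⟩ ω)) ∂P :=
  stmt_2_general P n hn X hXnonneg hXint hident p hp hpsum A hAmeas hAnonneg hindep
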